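/- arXiv:1105.1188 — 5 statements merged into one kernel-verified Lean document; each statement's English description precedes it below -/
import Mathlib

section
/- Let A be an (n+1)×(n+1) integer matrix that is d-stochastic (every column sums to d) and whose restriction to the sublattice Λ₀ of ℤ^{n+1} consisting of vectors with coordinate sum zero is a lattice automorphism (i.e., A maps Λ₀ bijectively onto Λ₀). Then det(A) = d or det(A) = -d. -/
/-!
Conjugate `A` by the unimodular matrix `Q` that replaces the last coordinate by the coordinate
sum. Since the columns of `A` sum to `d`, the last row of `Q A Q⁻¹` is `d` times the last unit
row, so `det A = d · det C` where `C` is the upper left `n × n` block. As `Q` carries `Λ₀` onto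
the hyperplane `x_last = 0`, on which `Q A Q⁻¹` acts through `C`, the hypothesis makes `C`
surjective on `ℤⁿ`, hence unimodular, and `det C = ±1`.
-/

open Matrix

namespace Matrix

section SumAt

variable {ι R : Type*} [Fintype ι] [DecidableEq ι] [CommRing R]

/-- `sumAt j *ᵥ v` is `v` with its `j`-th coordinate replaced by `∑ i, v i`. -/
def sumAt (j : ι) : Matrix ι ι R := (1 : Matrix ι ι R).updateRow j 1

theorem det_sumAt (j : ι) : (sumAt j : Matrix ι ι R).det = 1 := by
  have h := det_updateRow_sum (1 : Matrix ι ι R) j 1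
  have hrow : ∑ k, (1 : ι → R) k • (1 : Matrix ι ι R) k = 1 := by
    ext i; rw [Finset.sum_apply]; simp [one_apply]
  rwa [hrow, Pi.one_apply, one_smul, det_one] at h

theorem isUnit_det_sumAt (j : ι) : IsUnit (sumAt j : Matrix ι ι R).det := by
  rw [det_sumAt]; exact isUnit_one

theorem sumAt_mulVec_apply_self (j : ι) (v : ι → R) : (sumAt j *ᵥ v) j = ∑ i, v i := by
  simp [sumAt, mulVec, dotProduct]

theorem invOn_sumAt_mulVec (j : ι) :
    Set.InvOn (sumAt j : Matrix ι ι R)⁻¹.mulVec (sumAt j).mulVec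
      {v | ∑ i, v i = 0} {v | v j = 0} := by
  constructor <;> intro v _ <;>
    simp [mulVec_mulVec, nonsing_inv_mul, mul_nonsing_inv, isUnit_det_sumAt]

theorem bijOn_sumAt_mulVec (j : ι) :
    Set.BijOn (sumAt j : Matrix ι ι R).mulVec {v | ∑ i, v i = 0} {v | v j = 0} := by
  refine (invOn_sumAt_mulVec j).bijOn (fun v hv => ?_) (fun v hv => ?_)
  · rwa [Set.mem_ofPred_eq, sumAt_mulVec_apply_self]
  · rwa [Set.mem_ofPred_eq, ← sumAt_mulVec_apply_self, (invOn_sumAt_mulVec j).2 hv]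

theorem sumAt_mul_mul_inv_apply_self {d : R} {A : Matrix ι ι R} (hA : ∀ k, ∑ i, A i k = d)
    (j : ι) :
    (sumAt j * A * (sumAt j)⁻¹ : Matrix ι ι R) j = Pi.single j d := by
  have hrow : ∀ k, (sumAt j * A : Matrix ι ι R) j k = d * sumAt j j k := fun k => by
    simp [sumAt, mul_apply, hA]
  ext k
  rw [mul_apply]
  simp only [hrow, mul_assoc, ← Finset.mul_sum, ← mul_apply,
    mul_nonsing_inv _ (isUnit_det_sumAt j), one_apply]
  simp [Pi.single_apply, eq_comm]

theorem bijOn_sumAt_mul_mul_inv_mulVec {A : Matrix ι ι R}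
    (hA : Set.BijOn A.mulVec {v | ∑ i, v i = 0} {v | ∑ i, v i = 0}) (j : ι) :
    Set.BijOn (sumAt j * A * (sumAt j)⁻¹ : Matrix ι ι R).mulVec
      {v | v j = 0} {v | v j = 0} := by
  have hQ := bijOn_sumAt_mulVec (R := R) j
  have : (sumAt j * A * (sumAt j)⁻¹ : Matrix ι ι R).mulVec =
      (sumAt j).mulVec ∘ A.mulVec ∘ (sumAt j : Matrix ι ι R)⁻¹.mulVec := by
    ext v; simp [mulVec_mulVec, Matrix.mul_assoc]
  rw [this]
  exact (hQ.comp hA).comp (hQ.symm (invOn_sumAt_mulVec j).symm)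

end SumAt

section FinLast

variable {R : Type*} [CommRing R] {n : ℕ}

theorem det_eq_mul_det_submatrix_castSucc {B : Matrix (Fin (n + 1)) (Fin (n + 1)) R} {d : R}
    (hB : B (Fin.last n) = Pi.single (Fin.last n) d) :
    B.det = d * (B.submatrix Fin.castSucc Fin.castSucc).det := by
  rw [det_succ_row B (Fin.last n), Finset.sum_eq_single (Fin.last n)]
  · simp [hB, Fin.succAbove_last]
  · intro j _ hj
    simp [hB, hj]
  · simp

theorem submatrix_castSucc_mulVec (B : Matrix (Fin (n + 1)) (Fin (n + 1)) R) (w : Fin n → R) :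
    B.submatrix Fin.castSucc Fin.castSucc *ᵥ w = Fin.init (B *ᵥ Fin.snoc w 0) := by
  ext i
  simp [mulVec, dotProduct, Fin.init, Fin.sum_univ_castSucc]

theorem surjective_submatrix_castSucc_mulVec {B : Matrix (Fin (n + 1)) (Fin (n + 1)) R}
    (hB : Set.SurjOn B.mulVec {x | x (Fin.last n) = 0} {x | x (Fin.last n) = 0}) :
    Function.Surjective (B.submatrix Fin.castSucc Fin.castSucc).mulVec := by
  intro u
  obtain ⟨x, hx, hBx⟩ := hB (a := Fin.snoc u 0) (Fin.snoc_last _ _)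
  refine ⟨Fin.init x, ?_⟩
  rw [submatrix_castSucc_mulVec, ← hx, Fin.snoc_init_self, hBx, Fin.init_snoc]

end FinLast

end Matrix

theorem stmt0_general (n : ℕ) (d : ℤ)
    (A : Matrix (Fin (n + 1)) (Fin (n + 1)) ℤ)
    (hstoch : ∀ j, ∑ i, A i j = d)
    (hauto : Set.BijOn A.mulVec {v | ∑ i, v i = 0} {v | ∑ i, v i = 0}) :
    A.det = d ∨ A.det = -d := by
  set B := sumAt (Fin.last n) * A * (sumAt (Fin.last n))⁻¹
  have hdet : A.det = d * (B.submatrix Fin.castSucc Fin.castSucc).det := by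
    rw [← det_conj ((isUnit_iff_isUnit_det _).2 (isUnit_det_sumAt (Fin.last n))) A,
      det_eq_mul_det_submatrix_castSucc (sumAt_mul_mul_inv_apply_self hstoch _)]
  have hunit : IsUnit (B.submatrix Fin.castSucc Fin.castSucc).det :=
    (isUnit_iff_isUnit_det _).1 <| mulVec_surjective_iff_isUnit.1 <|
      surjective_submatrix_castSucc_mulVec (bijOn_sumAt_mul_mul_inv_mulVec hauto _).surjOn
  rcases Int.isUnit_iff.1 hunit with h | h <;> simp [hdet, h]

/-- A d-stochastic (n+1)×(n+1) integer matrix whose restriction to the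
lattice Λ₀ = {v : Σ vᵢ = 0} is an automorphism has determinant d or -d. -/
theorem stmt0 (n : ℕ) (hn : 1 ≤ n) (d : ℤ)
    (A : Matrix (Fin (n + 1)) (Fin (n + 1)) ℤ)
    (hstoch : ∀ j, ∑ i, A i j = d)
    (hauto : Set.BijOn A.mulVec {v | ∑ i, v i = 0} {v | ∑ i, v i = 0}) :
    A.det = d ∨ A.det = -d :=
  stmt0_general n d A hstoch hauto
end

section
/- Let A be a d-stochastic (n+1)×(n+1) integer matrix with d ≠ 0 which is invertible over ℚ and such that A restricts to an automorphism of Λ₀ = {v ∈ ℤ^{n+1} : Σ vᵢ = 0}. Then the difference of any two columns of A⁻¹ (computed over ℚ) is an integer vector, i.e., d·A⁻¹ has all entries in ℤ and the entries of A⁻¹ within each row differ by integers. -/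
/-!
Since `A` has column sums `d` and maps the zero-sum lattice onto itself, every integer vector whose
coordinate sum is divisible by `d` is `A w` for an integer vector `w`. Both `d • eⱼ` and `eⱼ - eₖ`
are such vectors, and applying `A⁻¹` to them gives `d` times the `j`-th column of `A⁻¹` and the
difference of its `j`-th and `k`-th columns, which are therefore integral.
-/

open Matrix

variable {ι : Type*} [Fintype ι]

theorem Matrix.sum_mulVec_of_sum_col_eq {R : Type*} [CommSemiring R] {A : Matrix ι ι R} {d : R}
    (hcol : ∀ j, ∑ i, A i j = d) (v : ι → R) : ∑ i, (A *ᵥ v) i = d * ∑ i, v i := by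
  simp only [mulVec, dotProduct, Finset.mul_sum]
  rw [Finset.sum_comm]
  simp only [← Finset.sum_mul, hcol]

/-- Write `∑ t = d * c`; then `t - A (c • eᵢ)` has sum zero, so it lies in the image of `A`. -/
theorem Matrix.exists_mulVec_eq_of_dvd_sum {R : Type*} [CommRing R] [DecidableEq ι] [Nonempty ι]
    {A : Matrix ι ι R} {d : R} (hcol : ∀ j, ∑ i, A i j = d)
    (hsurj : Set.SurjOn A.mulVec {v | ∑ i, v i = 0} {v | ∑ i, v i = 0})
    {t : ι → R} (ht : d ∣ ∑ i, t i) : ∃ w, A *ᵥ w = t := by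
  obtain ⟨c, hc⟩ := ht
  let u : ι → R := Pi.single (Classical.arbitrary ι) c
  have hu : ∑ i, (A *ᵥ u) i = d * c := by
    rw [sum_mulVec_of_sum_col_eq hcol, Finset.sum_pi_single']
    simp
  obtain ⟨v, -, hv⟩ := hsurj (show ∑ i, (t - A *ᵥ u) i = 0 by
    simp [Finset.sum_sub_distrib, hu, hc])
  exact ⟨u + v, by rw [mulVec_add, hv, add_sub_cancel]⟩

theorem Matrix.inv_map_mulVec_comp_of_mulVec_eq {R S : Type*} [CommRing R] [CommRing S]
    [DecidableEq ι] (f : R →+* S) {A : Matrix ι ι R} (hA : IsUnit (A.map f).det)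
    {w t : ι → R} (hw : A *ᵥ w = t) : (A.map f)⁻¹ *ᵥ (f ∘ t) = f ∘ w := by
  have hmap : f ∘ t = A.map f *ᵥ (f ∘ w) := funext fun i => hw ▸ RingHom.map_mulVec f A w i
  rw [hmap, mulVec_mulVec, nonsing_inv_mul _ hA, one_mulVec]

theorem Matrix.exists_inv_map_mulVec_eq_intCast {S : Type*} [CommRing S] [DecidableEq ι]
    [Nonempty ι] {A : Matrix ι ι ℤ} {d : ℤ} (hcol : ∀ j, ∑ i, A i j = d)
    (hsurj : Set.SurjOn A.mulVec {v | ∑ i, v i = 0} {v | ∑ i, v i = 0})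
    (hA : IsUnit (A.map ((↑) : ℤ → S)).det) {t : ι → ℤ} (ht : d ∣ ∑ i, t i) :
    ∃ w : ι → ℤ, (A.map ((↑) : ℤ → S))⁻¹ *ᵥ (fun i => (t i : S)) = fun i => (w i : S) :=
  (exists_mulVec_eq_of_dvd_sum hcol hsurj ht).imp fun _ hw =>
    inv_map_mulVec_comp_of_mulVec_eq (Int.castRingHom S) hA hw

theorem stmt2_general (n : ℕ) (d : ℤ)
    (A : Matrix (Fin (n + 1)) (Fin (n + 1)) ℤ)
    (hstoch : ∀ j, ∑ i, A i j = d)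
    (hinv : IsUnit (A.map ((↑) : ℤ → ℚ)).det)
    (hauto : Set.BijOn A.mulVec {v | ∑ i, v i = 0} {v | ∑ i, v i = 0}) :
    (∀ i j, ∃ z : ℤ, (d : ℚ) * (A.map ((↑) : ℤ → ℚ))⁻¹ i j = z) ∧
      (∀ i j k, ∃ z : ℤ,
        (A.map ((↑) : ℤ → ℚ))⁻¹ i j - (A.map ((↑) : ℤ → ℚ))⁻¹ i k = z) := by
  constructor
  · intro i j
    obtain ⟨w, hw⟩ := exists_inv_map_mulVec_eq_intCast hstoch hauto.surjOn hinv
      (t := Pi.single j d) (by simp)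
    refine ⟨w i, ?_⟩
    have hcast : (fun l => ((Pi.single j d : Fin (n + 1) → ℤ) l : ℚ)) = Pi.single j (d : ℚ) := by
      ext l; simp only [Pi.single_apply]; split_ifs <;> simp
    rw [hcast, mulVec_single] at hw
    simpa [mul_comm] using congrFun hw i
  · intro i j k
    obtain ⟨w, hw⟩ := exists_inv_map_mulVec_eq_intCast hstoch hauto.surjOn hinv
      (t := Pi.single j 1 - Pi.single k 1) (by simp [Finset.sum_sub_distrib])
    refine ⟨w i, ?_⟩
    have hcast : (fun l => ((Pi.single j 1 - Pi.single k 1 : Fin (n + 1) → ℤ) l : ℚ)) =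
        Pi.single j 1 - Pi.single k 1 := by
      ext l; simp only [Pi.sub_apply, Int.cast_sub, Pi.single_apply]; split_ifs <;> simp
    rw [hcast, mulVec_sub, mulVec_single_one, mulVec_single_one] at hw
    simpa using congrFun hw i

/-- If A is d-stochastic (d ≠ 0), invertible over ℚ, and restricts to an
automorphism of Λ₀, then d·A⁻¹ is integral and within each row of A⁻¹ the entries
differ by integers. -/
theorem stmt2 (n : ℕ) (hn : 1 ≤ n) (d : ℤ) (hd : d ≠ 0)
    (A : Matrix (Fin (n + 1)) (Fin (n + 1)) ℤ)
    (hstoch : ∀ j, ∑ i, A i j = d)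
    (hinv : IsUnit (A.map ((↑) : ℤ → ℚ)).det)
    (hauto : Set.BijOn A.mulVec {v | ∑ i, v i = 0} {v | ∑ i, v i = 0}) :
    (∀ i j, ∃ z : ℤ, (d : ℚ) * (A.map ((↑) : ℤ → ℚ))⁻¹ i j = z) ∧
      (∀ i j k, ∃ z : ℤ,
        (A.map ((↑) : ℤ → ℚ))⁻¹ i j - (A.map ((↑) : ℤ → ℚ))⁻¹ i k = z) :=
  stmt2_general n d A hstoch hinv hauto
end

section
/- Define, for g ∈ GL_n(ℤ), the degree d(g) as follows: form the (n+1)×(n+1) integer matrix M_g whose bottom-right n×n block is g, whose zeroth row is chosen so that every column of M_g sums to 0, and whose zeroth column is zero; then d(g) = Σ_{i=0}^{n} max(0, −min_j (M_g)_{ij}) (the sum over rows of the negative of the least entry, or 0 if no entry is negative). Then d(g₁g₂) ≤ d(g₁)·d(g₂) for all g₁, g₂ ∈ GL_n(ℤ). -/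
/-- The (n+1)×(n+1) zero-column-sum extension of an n×n integer matrix g:
zeroth column zero, bottom-right block g, zeroth row making all column sums 0. -/
def Mg {n : ℕ} (g : Matrix (Fin n) (Fin n) ℤ) : Matrix (Fin (n + 1)) (Fin (n + 1)) ℤ :=
  Matrix.of fun i j =>
    if hj : j.val = 0 then 0
    else if hi : i.val = 0 then
      -∑ k : Fin n, g k ⟨j.val - 1, by have := j.isLt; omega⟩
    else g ⟨i.val - 1, by have := i.isLt; omega⟩ ⟨j.val - 1, by have := j.isLt; omega⟩

/-- The degree of the monomial Cremona transformation associated to g ∈ GL_n(ℤ):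
the sum over rows of the negative of the least entry of M_g (or 0). -/
def cremonaDeg {n : ℕ} (g : Matrix (Fin n) (Fin n) ℤ) : ℤ :=
  ∑ i : Fin (n + 1), max 0 (-(Finset.univ.inf' Finset.univ_nonempty (Mg g i)))

/-!
Let `m i` be the negative part of the least entry of row `i` of `M`, so that `M i k + m i ≥ 0`.
If the columns of `N` sum to zero, then `(M * N) i j = ∑ k, (M i k + m i) * N k j`, and bounding
`N k j` below by `-p k` (with `p` the same quantity for `N`) gives
`-(M * N) i j ≤ ∑ k, (M i k + m i) * p k`. Summing over `i` and using that the columns of `M` sum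
to zero leaves `(∑ i, m i) * (∑ k, p k)`. The degree is this row quantity for `M_g`, whose columns
sum to zero, and `g ↦ M_g` is multiplicative.
-/

open Finset Matrix

def rowMin {ι κ α : Type*} [Fintype κ] [Nonempty κ] [SemilatticeInf α] (M : Matrix ι κ α)
    (i : ι) : α :=
  univ.inf' univ_nonempty (M i)

lemma rowMin_le {ι κ α : Type*} [Fintype κ] [Nonempty κ] [SemilatticeInf α] (M : Matrix ι κ α)
    (i : ι) (j : κ) : rowMin M i ≤ M i j :=
  inf'_le _ (mem_univ j)

lemma mul_apply_eq_sum_add_mul {l m o R : Type*} [Fintype m] [NonUnitalNonAssocSemiring R]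
    {M : Matrix l m R} {N : Matrix m o R} (hN : ∀ j, ∑ k, N k j = 0) (c : R) (i : l) (j : o) :
    (M * N) i j = ∑ k, (M i k + c) * N k j := by
  simp only [add_mul, sum_add_distrib, ← mul_sum, hN, mul_zero, add_zero, mul_apply]

section NegPartRowMin

variable {ι κ R : Type*} [Fintype ι] [Fintype κ] [Nonempty κ]
  [Ring R] [LinearOrder R] [IsOrderedRing R]

omit [Fintype ι] in
lemma neg_negPart_rowMin_le (M : Matrix ι κ R) (i : ι) (j : κ) : -(rowMin M i)⁻ ≤ M i j :=
  (neg_le.mpr (neg_le_negPart _)).trans (rowMin_le M i j)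

lemma negPart_rowMin_mul_le [Nonempty ι] (M : Matrix ι ι R) {N : Matrix ι κ R}
    (hN : ∀ j, ∑ k, N k j = 0) (i : ι) :
    (rowMin (M * N) i)⁻ ≤ ∑ k, (M i k + (rowMin M i)⁻) * (rowMin N k)⁻ := by
  have hweight : ∀ k, 0 ≤ M i k + (rowMin M i)⁻ := fun k ↦
    neg_le_iff_add_nonneg.mp (neg_negPart_rowMin_le M i k)
  refine sup_le ?_ (sum_nonneg fun k _ ↦ mul_nonneg (hweight k) (negPart_nonneg _))
  refine neg_le.mpr (le_inf' _ _ fun j _ ↦ ?_)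
  rw [mul_apply_eq_sum_add_mul hN (rowMin M i)⁻, ← sum_neg_distrib]
  exact sum_le_sum fun k _ ↦ by
    rw [← mul_neg]
    exact mul_le_mul_of_nonneg_left (neg_negPart_rowMin_le N k j) (hweight k)

theorem sum_negPart_rowMin_mul_le [Nonempty ι] {M N : Matrix ι ι R}
    (hM : ∀ j, ∑ i, M i j = 0) (hN : ∀ j, ∑ i, N i j = 0) :
    ∑ i, (rowMin (M * N) i)⁻ ≤ (∑ i, (rowMin M i)⁻) * ∑ k, (rowMin N k)⁻ :=
  calc ∑ i, (rowMin (M * N) i)⁻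
      ≤ ∑ i, ∑ k, (M i k + (rowMin M i)⁻) * (rowMin N k)⁻ :=
        sum_le_sum fun i _ ↦ negPart_rowMin_mul_le M hN i
    _ = ∑ k, (∑ i, M i k + ∑ i, (rowMin M i)⁻) * (rowMin N k)⁻ := by
        rw [sum_comm]
        simp only [← sum_add_distrib, sum_mul]
    _ = (∑ i, (rowMin M i)⁻) * ∑ k, (rowMin N k)⁻ := by
        simp only [hM, zero_add, mul_sum]

end NegPartRowMin

section Mg

variable {n : ℕ} (g : Matrix (Fin n) (Fin n) ℤ)

@[simp] lemma Mg_zero_right (i : Fin (n + 1)) : Mg g i 0 = 0 := by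
  simp [Mg]

@[simp] lemma Mg_zero_succ (j : Fin n) : Mg g 0 j.succ = -∑ k, g k j := by
  simp [Mg]

@[simp] lemma Mg_succ_succ (i j : Fin n) : Mg g i.succ j.succ = g i j := by
  simp [Mg]

lemma sum_Mg_apply (j : Fin (n + 1)) : ∑ i, Mg g i j = 0 := by
  cases j using Fin.cases <;> simp [Fin.sum_univ_succ]

lemma Mg_mul (g' : Matrix (Fin n) (Fin n) ℤ) : Mg (g * g') = Mg g * Mg g' := by
  ext i j
  cases j using Fin.cases with
  | zero => simp [mul_apply]
  | succ j =>
    cases i using Fin.cases with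
    | zero =>
      simp only [Mg_zero_succ, mul_apply, Fin.sum_univ_succ, Mg_zero_right, zero_mul, zero_add,
        Mg_succ_succ, sum_neg_distrib, neg_mul, sum_mul]
      exact congrArg _ sum_comm
    | succ i => simp [mul_apply, Fin.sum_univ_succ]

lemma cremonaDeg_eq_sum_negPart_rowMin : cremonaDeg g = ∑ i, (rowMin (Mg g) i)⁻ := by
  simp only [cremonaDeg, rowMin, negPart_def, max_comm]

end Mg

theorem stmt5_general (n : ℕ) (g₁ g₂ : GL (Fin n) ℤ) :
    cremonaDeg ((g₁ * g₂ : GL (Fin n) ℤ) : Matrix (Fin n) (Fin n) ℤ) ≤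
      cremonaDeg (g₁ : Matrix (Fin n) (Fin n) ℤ) *
        cremonaDeg (g₂ : Matrix (Fin n) (Fin n) ℤ) := by
  simp only [Units.val_mul, cremonaDeg_eq_sum_negPart_rowMin, Mg_mul]
  exact sum_negPart_rowMin_mul_le (sum_Mg_apply _) (sum_Mg_apply _)

/-- d(g₁g₂) ≤ d(g₁)·d(g₂) for g₁, g₂ ∈ GL_n(ℤ). -/
theorem stmt5 (n : ℕ) (hn : 2 ≤ n) (g₁ g₂ : GL (Fin n) ℤ) :
    cremonaDeg ((g₁ * g₂ : GL (Fin n) ℤ) : Matrix (Fin n) (Fin n) ℤ) ≤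
      cremonaDeg (g₁ : Matrix (Fin n) (Fin n) ℤ) *
        cremonaDeg (g₂ : Matrix (Fin n) (Fin n) ℤ) :=
  stmt5_general n g₁ g₂
end

section
/- Let A be a d-stochastic (n+1)×(n+1) integer matrix with d ≥ 1 that restricts to an automorphism of Λ₀ = {v ∈ ℤ^{n+1} : Σvᵢ = 0}, and let A⁻¹ be its inverse over ℚ. For each row i let rᵢ be the minimum entry of row i of A⁻¹. Then the matrix B = A⁻¹ − Σᵢ rᵢ Rᵢ (where Rᵢ has row i all ones and other rows zero) has all entries in ℕ, each row of B contains a zero entry, B is stochastic, and its common column sum equals 1/d − Σᵢ rᵢ. -/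
/-!
Since `𝟙ᵀ A = d 𝟙ᵀ` with `d ≠ 0`, a kernel vector of `A` has coordinate sum zero, so injectivity
on `Λ₀` makes `A` invertible, and then `𝟙ᵀ A⁻¹ = d⁻¹ 𝟙ᵀ`. Since `A` maps `Λ₀` onto itself,
`A⁻¹ (e_j - e_k)` is integral, i.e. the entries in each row of `A⁻¹` differ by integers.
Subtracting the row minimum therefore leaves natural numbers, with a zero where the minimum
is attained.
-/

open Finset Matrix

namespace Matrix

variable {n : Type*} [Fintype n]

theorem sum_mulVec_of_sum_col_eq_s10 {R : Type*} [CommSemiring R] {A : Matrix n n R} {d : R}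
    (hA : ∀ j, ∑ i, A i j = d) (v : n → R) : ∑ i, (A *ᵥ v) i = d * ∑ j, v j := by
  simp only [mulVec, dotProduct]
  rw [sum_comm, mul_sum]
  exact sum_congr rfl fun j _ => by rw [← sum_mul, hA]

variable [DecidableEq n]

theorem det_ne_zero_of_injOn_sum_eq_zero {R : Type*} [CommRing R] [IsDomain R]
    {A : Matrix n n R} {d : R} (hA : ∀ j, ∑ i, A i j = d) (hd : d ≠ 0)
    (hinj : Set.InjOn A.mulVec {v | ∑ i, v i = 0}) : A.det ≠ 0 := by
  intro hdet
  obtain ⟨v, hv, hAv⟩ := exists_mulVec_eq_zero_iff.mpr hdet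
  have hsum : ∑ j, v j = 0 := by
    have := sum_mulVec_of_sum_col_eq_s10 hA v
    rw [hAv] at this
    simpa [hd] using this.symm
  exact hv (hinj hsum (by simp) (by rw [hAv, mulVec_zero]))

theorem sum_inv_apply_eq_inv {K : Type*} [Field K] {A : Matrix n n K} {d : K}
    (hA : ∀ j, ∑ i, A i j = d) (hdet : IsUnit A.det) (j : n) : ∑ i, A⁻¹ i j = d⁻¹ := by
  refine eq_inv_of_mul_eq_one_right ?_
  calc d * ∑ i, A⁻¹ i j = ∑ i, (A * A⁻¹) i j := (sum_mulVec_of_sum_col_eq_s10 hA _).symm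
    _ = 1 := by simp [mul_nonsing_inv A hdet, one_apply]

theorem inv_map_mulVec_eq_of_mulVec_eq {R K : Type*} [CommRing R] [CommRing K] (f : R →+* K)
    {A : Matrix n n R} (hdet : IsUnit (A.map f).det) {v w : n → R} (hw : A *ᵥ w = v) :
    (A.map f)⁻¹ *ᵥ (f ∘ v) = f ∘ w := by
  have hmap : A.map f *ᵥ (f ∘ w) = f ∘ v := by
    ext i
    rw [← hw, Function.comp_apply, RingHom.map_mulVec]
  rw [← hmap, mulVec_mulVec, nonsing_inv_mul _ hdet, one_mulVec]

theorem exists_intCast_eq_inv_sub_inv {K : Type*} [CommRing K] {A : Matrix n n ℤ}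
    (hsurj : Set.SurjOn A.mulVec {v | ∑ i, v i = 0} {v | ∑ i, v i = 0})
    (hdet : IsUnit (A.map ((↑) : ℤ → K)).det) (i j k : n) :
    ∃ z : ℤ, (A.map ((↑) : ℤ → K))⁻¹ i j - (A.map ((↑) : ℤ → K))⁻¹ i k = z := by
  -- `A⁻¹ (e_j - e_k)` is the integral preimage of `e_j - e_k ∈ Λ₀`.
  obtain ⟨w, -, hw⟩ := hsurj (show Pi.single j 1 - Pi.single k 1 ∈ {v : n → ℤ | ∑ i, v i = 0}
    by simp)
  refine ⟨w i, ?_⟩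
  have := congrFun (inv_map_mulVec_eq_of_mulVec_eq (Int.castRingHom K) hdet hw) i
  have hcast : (Int.castRingHom K) ∘ (Pi.single j 1 - Pi.single k 1) =
      Pi.single j 1 - Pi.single k 1 := by
    ext l
    simp [Pi.single_apply]
  rwa [hcast, mulVec_sub, mulVec_single_one, mulVec_single_one] at this

end Matrix

theorem exists_natCast_eq_sub_inf' {ι K : Type*} [Fintype ι] [Nonempty ι] [Ring K] [LinearOrder K]
    [IsStrictOrderedRing K] {f : ι → K} (hf : ∀ j k, ∃ z : ℤ, f j - f k = z) (j : ι) :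
    ∃ m : ℕ, f j - univ.inf' univ_nonempty f = m := by
  obtain ⟨k, -, hk⟩ := exists_mem_eq_inf' univ_nonempty f
  obtain ⟨z, hz⟩ := hf j k
  have hz0 : (0 : K) ≤ z := hz ▸ sub_nonneg.2 (hk ▸ inf'_le f (mem_univ j))
  obtain ⟨m, rfl⟩ := Int.eq_ofNat_of_zero_le (Int.cast_nonneg_iff.1 hz0)
  exact ⟨m, by rw [hk, hz, Int.cast_natCast]⟩

theorem stmt10_general (n : ℕ) (d : ℤ) (hd : 1 ≤ d)
    (A : Matrix (Fin (n + 1)) (Fin (n + 1)) ℤ)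
    (hstoch : ∀ j, ∑ i, A i j = d)
    (hauto : Set.BijOn A.mulVec {v | ∑ i, v i = 0} {v | ∑ i, v i = 0})
    (Ainv : Matrix (Fin (n + 1)) (Fin (n + 1)) ℚ)
    (hAinv : Ainv = (A.map ((↑) : ℤ → ℚ))⁻¹)
    (r : Fin (n + 1) → ℚ)
    (hr : ∀ i, r i = Finset.univ.inf' Finset.univ_nonempty (Ainv i))
    (B : Matrix (Fin (n + 1)) (Fin (n + 1)) ℚ)
    (hB : B = Matrix.of fun i j => Ainv i j - r i) :
    (∀ i j, ∃ m : ℕ, B i j = m) ∧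
      (∀ i, ∃ j, B i j = 0) ∧
      (∀ j, ∑ i, B i j = 1 / (d : ℚ) - ∑ i, r i) := by
  have hdet : IsUnit (A.map ((↑) : ℤ → ℚ)).det := by
    rw [← Int.cast_det, isUnit_iff_ne_zero, Int.cast_ne_zero]
    exact det_ne_zero_of_injOn_sum_eq_zero hstoch (by omega) hauto.injOn
  have hcol : ∀ j, ∑ i, Ainv i j = 1 / (d : ℚ) := fun j => by
    rw [hAinv, one_div]
    exact sum_inv_apply_eq_inv (fun j => by simp [← hstoch j]) hdet j
  have hdiff (i j k) : ∃ z : ℤ, Ainv i j - Ainv i k = z :=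
    hAinv ▸ exists_intCast_eq_inv_sub_inv hauto.surjOn hdet i j k
  subst hB
  refine ⟨fun i j => ?_, fun i => ?_, fun j => ?_⟩
  · simpa only [of_apply, hr i] using exists_natCast_eq_sub_inf' (hdiff i) j
  · obtain ⟨k, -, hk⟩ := exists_mem_eq_inf' univ_nonempty (Ainv i)
    exact ⟨k, by simp [hr i, hk]⟩
  · simp only [of_apply, sum_sub_distrib, hcol j]

/-- For a d-stochastic A (d ≥ 1) restricting to an automorphism of Λ₀,
subtracting from each row of A⁻¹ its minimum rᵢ yields a reduced matrix with entries
in ℕ, a zero in each row, and all column sums equal to 1/d − Σᵢ rᵢ. -/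
theorem stmt10 (n : ℕ) (hn : 1 ≤ n) (d : ℤ) (hd : 1 ≤ d)
    (A : Matrix (Fin (n + 1)) (Fin (n + 1)) ℤ)
    (hstoch : ∀ j, ∑ i, A i j = d)
    (hauto : Set.BijOn A.mulVec {v | ∑ i, v i = 0} {v | ∑ i, v i = 0})
    (Ainv : Matrix (Fin (n + 1)) (Fin (n + 1)) ℚ)
    (hAinv : Ainv = (A.map ((↑) : ℤ → ℚ))⁻¹)
    (r : Fin (n + 1) → ℚ)
    (hr : ∀ i, r i = Finset.univ.inf' Finset.univ_nonempty (Ainv i))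
    (B : Matrix (Fin (n + 1)) (Fin (n + 1)) ℚ)
    (hB : B = Matrix.of fun i j => Ainv i j - r i) :
    (∀ i j, ∃ m : ℕ, B i j = m) ∧
      (∀ i, ∃ j, B i j = 0) ∧
      (∀ j, ∑ i, B i j = 1 / (d : ℚ) - ∑ i, r i) :=
  stmt10_general n d hd A hstoch hauto Ainv hAinv r hr B hB
end

section
/- Let A be the (n+1)×(n+1) matrix of Example 2 with d ≥ 3 (upper triangular, A₁₁ = d, superdiagonal entries d−1, other diagonal entries 1). The degree of the inverse monomial Cremona transformation, computed as 1/d − Σᵢ rᵢ where rᵢ is the least entry in row i of A⁻¹ (over ℚ), equals ((d−1)ⁿ − 1)/(d−2). -/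
/-!
With `c = d - 1`, the inverse of `A` is the upper triangular matrix with entries `(-c)^(j-i)`,
its first row divided by `d`. Write `e(m)` for the largest odd number `≤ m`. For `c ≥ 1` the least
of `(-c)^0, …, (-c)^m` is `-c^e(m)`, so row `i < n` has minimum `-c^e(n-i)` (divided by `d` for
`i = 0`) and the last row has minimum `0`. Passing from `n` to `n + 1` adds exactly `c^n` to
`1/d - ∑ rᵢ`, because `c^e(n+1) + c·c^e(n) = c^n + c^(n+1)` whatever the parity of `n`; hence
`1/d - ∑ rᵢ = 1 + c + ⋯ + c^(n-1)`.
-/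

open Finset Matrix

/-- The largest odd number `≤ m`, for `m ≠ 0`. -/
def oddFloor (m : ℕ) : ℕ := 2 * ((m - 1) / 2) + 1

lemma odd_oddFloor (m : ℕ) : Odd (oddFloor m) := odd_two_mul_add_one _

lemma oddFloor_le {m : ℕ} (hm : m ≠ 0) : oddFloor m ≤ m := by unfold oddFloor; omega

lemma le_oddFloor {k m : ℕ} (hk : Odd k) (hkm : k ≤ m) : k ≤ oddFloor m := by
  obtain ⟨j, rfl⟩ := hk
  unfold oddFloor
  omega

section CommRing
variable {R : Type*} [CommRing R] (c : R)

lemma neg_pow_sub_eq_neg_mul {i k : ℕ} (h : i < k) :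
    (-c) ^ (k - i) = -(c * (-c) ^ (k - (i + 1))) := by
  rw [show k - i = k - (i + 1) + 1 by omega, pow_succ]
  ring

lemma pow_oddFloor_add_two_add_mul (k : ℕ) :
    c ^ oddFloor (k + 2) + c * c ^ oddFloor (k + 1) = c ^ (k + 1) + c ^ (k + 2) := by
  obtain ⟨j, rfl | rfl⟩ := Nat.even_or_odd' k
  · have h₁ : oddFloor (2 * j + 2) = 2 * j + 1 := by unfold oddFloor; omega
    have h₂ : oddFloor (2 * j + 1) = 2 * j + 1 := by unfold oddFloor; omega
    rw [h₁, h₂]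
    ring
  · have h₁ : oddFloor (2 * j + 1 + 2) = 2 * j + 3 := by unfold oddFloor; omega
    have h₂ : oddFloor (2 * j + 1 + 1) = 2 * j + 1 := by unfold oddFloor; omega
    rw [h₁, h₂]
    ring

lemma one_add_pow_oddFloor_add_mul_sum (k : ℕ) :
    1 + c ^ oddFloor (k + 1) + (1 + c) * ∑ m ∈ range k, c ^ oddFloor (m + 1)
      = (1 + c) * ∑ m ∈ range (k + 1), c ^ m := by
  induction k with
  | zero => simp [oddFloor]
  | succ k ih =>
    rw [sum_range_succ, sum_range_succ _ (k + 1), mul_add, mul_add, ← ih]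
    linear_combination pow_oddFloor_add_two_add_mul c k

lemma sum_fin_pow_oddFloor_sub (k : ℕ) :
    ∑ i : Fin k, c ^ oddFloor (k - i) = ∑ m ∈ range k, c ^ oddFloor (m + 1) := by
  rw [Fin.sum_univ_eq_sum_range (fun i => c ^ oddFloor (k - i)), ← sum_range_reflect]
  exact sum_congr rfl fun m hm => by rw [show k - (k - 1 - m) = m + 1 by simp at hm; omega]

end CommRing

section Inverse
variable {K : Type*} [Field K] (n : ℕ) (d c : K)

/-- The matrix of Example 2 is `bidiag n d (d - 1)`. -/
def bidiag : Matrix (Fin (n + 1)) (Fin (n + 1)) K :=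
  of fun i j => if i = j then (if i.val = 0 then d else 1) else if j.val = i.val + 1 then c else 0

def bidiagInv : Matrix (Fin (n + 1)) (Fin (n + 1)) K :=
  of fun i j => if i ≤ j then (if i.val = 0 then d⁻¹ else 1) * (-c) ^ (j.val - i.val) else 0

lemma bidiag_mul_bidiagInv (hd : d ≠ 0) : bidiag n d c * bidiagInv n d c = 1 := by
  ext i k
  have hsplit : ∀ j, bidiag n d c i j =
      (if i = j then (if i.val = 0 then d else 1) else 0) +
        (if j.val = i.val + 1 then c else 0) := by
    intro j
    by_cases h : i = j
    · subst h; simp [bidiag]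
    · simp [bidiag, h]
  simp only [mul_apply, hsplit, add_mul, sum_add_distrib, ite_mul, zero_mul, sum_ite_eq,
    mem_univ, if_true]
  by_cases hi : i.val < n
  · rw [Fintype.sum_eq_single ⟨i.val + 1, by omega⟩ (fun j hj => if_neg fun h => hj (Fin.ext h)),
      if_pos rfl]
    simp only [bidiagInv, of_apply, one_apply, Fin.le_def, Fin.ext_iff, Nat.add_one_ne_zero,
      if_false]
    split_ifs <;> first | omega | skip
    all_goals first | (rw [neg_pow_sub_eq_neg_mul c (by omega)]; field_simp; ring) | simp_all
  · rw [sum_eq_zero fun j _ => if_neg (by omega)]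
    simp only [bidiagInv, of_apply, one_apply, Fin.le_def, Fin.ext_iff]
    split_ifs <;> first | omega | simp_all

lemma inv_bidiag (hd : d ≠ 0) : (bidiag n d c)⁻¹ = bidiagInv n d c :=
  inv_eq_right_inv (bidiag_mul_bidiagInv n d c hd)

end Inverse

section RowMinimum
variable {K : Type*} [Field K] [LinearOrder K] [IsStrictOrderedRing K] {n : ℕ} {d c : K}

lemma neg_pow_oddFloor_le_neg_pow (hc : 1 ≤ c) {k m : ℕ} (hkm : k ≤ m) :
    -c ^ oddFloor m ≤ (-c) ^ k := by
  rcases Nat.even_or_odd k with hk | hk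
  · have hc₀ : 0 ≤ c := by linarith
    rw [hk.neg_pow]
    linarith [pow_nonneg hc₀ k, pow_nonneg hc₀ (oddFloor m)]
  · rw [hk.neg_pow]
    exact neg_le_neg (pow_le_pow_right₀ hc (le_oddFloor hk hkm))

lemma inf'_bidiagInv_last (hn : n ≠ 0) :
    univ.inf' univ_nonempty (bidiagInv n d c (Fin.last n)) = 0 := by
  apply le_antisymm
  · calc univ.inf' univ_nonempty (bidiagInv n d c (Fin.last n))
        ≤ bidiagInv n d c (Fin.last n) 0 := inf'_le _ (mem_univ _)
      _ = 0 := if_neg (by simp; omega)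
  · refine le_inf' _ _ fun j _ => ?_
    simp only [bidiagInv, of_apply, Fin.val_last]
    split_ifs with h
    · rw [show j.val - n = 0 by omega]; simp
    · exact le_rfl

lemma inf'_bidiagInv_of_lt (hd : 0 < d) (hc : 1 ≤ c) (i : Fin (n + 1)) (hi : i.val < n) :
    univ.inf' univ_nonempty (bidiagInv n d c i) =
      (if i.val = 0 then d⁻¹ else 1) * -c ^ oddFloor (n - i) := by
  set s : K := if i.val = 0 then d⁻¹ else 1
  have hs : 0 < s := by unfold s; split_ifs <;> positivity
  have hmin : i.val + oddFloor (n - i) < n + 1 := by have := oddFloor_le (m := n - i); omega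
  apply le_antisymm
  · calc univ.inf' univ_nonempty (bidiagInv n d c i)
        ≤ bidiagInv n d c i ⟨i + oddFloor (n - i), hmin⟩ := inf'_le _ (mem_univ _)
      _ = s * -c ^ oddFloor (n - i) := by
        rw [bidiagInv, of_apply, if_pos (by simp [Fin.le_def]), Nat.add_sub_cancel_left,
          (odd_oddFloor _).neg_pow]
  · refine le_inf' _ _ fun j _ => ?_
    by_cases h : i ≤ j
    · rw [bidiagInv, of_apply, if_pos h]
      exact mul_le_mul_of_nonneg_left
        (neg_pow_oddFloor_le_neg_pow hc (by rw [Fin.le_def] at h; omega)) hs.le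
    · rw [bidiagInv, of_apply, if_neg h]
      have hc₀ : 0 ≤ c := by linarith
      exact mul_nonpos_of_nonneg_of_nonpos hs.le (neg_nonpos.2 (pow_nonneg hc₀ _))

end RowMinimum

/-- For the matrix A of Example 2 with d ≥ 3, the inverse degree
1/d − Σᵢ rᵢ (rᵢ the least entry of row i of A⁻¹ over ℚ) equals ((d−1)ⁿ − 1)/(d−2). -/
theorem stmt14 (n : ℕ) (hn : 2 ≤ n) (d : ℤ) (hd : 3 ≤ d)
    (A : Matrix (Fin (n + 1)) (Fin (n + 1)) ℤ)
    (hA : A = Matrix.of fun i j =>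
      if i = j then (if i.val = 0 then d else 1)
      else if j.val = i.val + 1 then d - 1 else 0)
    (r : Fin (n + 1) → ℚ)
    (hr : ∀ i, r i = Finset.univ.inf' Finset.univ_nonempty
      ((A.map ((↑) : ℤ → ℚ))⁻¹ i)) :
    1 / (d : ℚ) - ∑ i, r i = (((d : ℚ) - 1) ^ n - 1) / ((d : ℚ) - 2) := by
  set c : ℚ := (d : ℚ) - 1 with hc_def
  have hc : 2 ≤ c := by rw [hc_def]; exact_mod_cast (by omega : (2 : ℤ) ≤ d - 1)
  have hdc : (d : ℚ) = 1 + c := by ring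
  have hinv : (A.map ((↑) : ℤ → ℚ))⁻¹ = bidiagInv n (1 + c) c := by
    have hA' : A.map ((↑) : ℤ → ℚ) = bidiag n (1 + c) c := by
      subst hA; ext i j; simp [bidiag, apply_ite ((↑) : ℤ → ℚ), hdc]
    rw [hA', inv_bidiag _ _ _ (by linarith)]
  obtain ⟨k, rfl⟩ : ∃ k, n = k + 1 := ⟨n - 1, by omega⟩
  have hlast : r (Fin.last (k + 1)) = 0 := by rw [hr, hinv, inf'_bidiagInv_last (by omega)]
  have hfirst : r 0 = -c ^ oddFloor (k + 1) / (1 + c) := by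
    rw [hr, hinv, inf'_bidiagInv_of_lt (by linarith) (by linarith) _ (by simp)]
    simp [div_eq_inv_mul]
  have hmid : ∀ i : Fin k, r i.succ.castSucc = -c ^ oddFloor (k - i) := by
    intro i
    rw [hr, hinv, inf'_bidiagInv_of_lt (by linarith) (by linarith) _ (by simp)]
    simp
  rw [Fin.sum_univ_castSucc, Fin.sum_univ_succ, hlast, hdc]
  simp only [Fin.castSucc_zero, hfirst, hmid, sum_neg_distrib, sum_fin_pow_oddFloor_sub]
  rw [show 1 + c - 2 = c - 1 by ring, ← geom_sum_eq (by linarith)]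
  field_simp
  linear_combination one_add_pow_oddFloor_add_mul_sum c k
end
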